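/- Let q ∈ K. For all plane posets P, Q, the coproduct Δ_q and the composition product satisfy the infinitesimal compatibility Δ_q(PQ) = (P ⊗ 1)Δ_q(Q) + Δ_q(P)(1 ⊗ Q) − P ⊗ Q in h_PP ⊗ h_PP. In particular, (h_PP, m, Δ_q) is an infinitesimal Hopf algebra. -/

import Mathlib

open scoped TensorProduct
open scoped Classical

noncomputable section

/-- A plane poset structure on a set `α`: two partial orders `≤_h` (`hle`) and `≤_r` (`rle`)
such that two distinct elements are comparable for `≤_h` if and only if they are not
comparable for `≤_r`. -/
structure PlanePoset (α : Type) where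
  hle : α → α → Prop
  rle : α → α → Prop
  hle_refl : ∀ x, hle x x
  hle_antisymm : ∀ x y, hle x y → hle y x → x = y
  hle_trans : ∀ x y z, hle x y → hle y z → hle x z
  rle_refl : ∀ x, rle x x
  rle_antisymm : ∀ x y, rle x y → rle y x → x = y
  rle_trans : ∀ x y z, rle x y → rle y z → rle x z
  compat : ∀ x y, x ≠ y → ((hle x y ∨ hle y x) ↔ ¬ (rle x y ∨ rle y x))

namespace PlanePoset

variable {α β : Type}

/-- The induced (total) order `x ≤ y iff x ≤_h y or x ≤_r y`. -/
def tle (P : PlanePoset α) (x y : α) : Prop := P.hle x y ∨ P.rle x y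

/-- Transport of a plane poset structure along a bijection. -/
def map (e : α ≃ β) (P : PlanePoset α) : PlanePoset β where
  hle x y := P.hle (e.symm x) (e.symm y)
  rle x y := P.rle (e.symm x) (e.symm y)
  hle_refl x := P.hle_refl _
  hle_antisymm x y h1 h2 := e.symm.injective (P.hle_antisymm _ _ h1 h2)
  hle_trans x y z h1 h2 := P.hle_trans _ _ _ h1 h2
  rle_refl x := P.rle_refl _
  rle_antisymm x y h1 h2 := e.symm.injective (P.rle_antisymm _ _ h1 h2)
  rle_trans x y z h1 h2 := P.rle_trans _ _ _ h1 h2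
  compat x y hxy := P.compat _ _ fun h => hxy (e.symm.injective h)

@[simp] theorem map_hle (e : α ≃ β) (P : PlanePoset α) (x y : β) :
    (P.map e).hle x y ↔ P.hle (e.symm x) (e.symm y) := Iff.rfl

@[simp] theorem map_rle (e : α ≃ β) (P : PlanePoset α) (x y : β) :
    (P.map e).rle x y ↔ P.rle (e.symm x) (e.symm y) := Iff.rfl

/-- The composition `PQ` of two plane posets: `x ≤_r y` for every `x ∈ P`, `y ∈ Q`. -/
def comp (P : PlanePoset α) (Q : PlanePoset β) : PlanePoset (α ⊕ β) where
  hle x y :=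
    match x, y with
    | Sum.inl a, Sum.inl b => P.hle a b
    | Sum.inr a, Sum.inr b => Q.hle a b
    | _, _ => False
  rle x y :=
    match x, y with
    | Sum.inl a, Sum.inl b => P.rle a b
    | Sum.inr a, Sum.inr b => Q.rle a b
    | Sum.inl _, Sum.inr _ => True
    | Sum.inr _, Sum.inl _ => False
  hle_refl := by
    rintro (a | a)
    · exact P.hle_refl a
    · exact Q.hle_refl a
  hle_antisymm := by
    rintro (a | a) (b | b) h1 h2
    · exact congrArg Sum.inl (P.hle_antisymm a b h1 h2)
    · exact h1.elim
    · exact h1.elim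
    · exact congrArg Sum.inr (Q.hle_antisymm a b h1 h2)
  hle_trans := by
    rintro (a | a) (b | b) (c | c) h1 h2 <;>
      first
        | exact P.hle_trans _ _ _ h1 h2
        | exact Q.hle_trans _ _ _ h1 h2
        | exact h1.elim
        | exact h2.elim
  rle_refl := by
    rintro (a | a)
    · exact P.rle_refl a
    · exact Q.rle_refl a
  rle_antisymm := by
    rintro (a | a) (b | b) h1 h2
    · exact congrArg Sum.inl (P.rle_antisymm a b h1 h2)
    · exact h2.elim
    · exact h1.elim
    · exact congrArg Sum.inr (Q.rle_antisymm a b h1 h2)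
  rle_trans := by
    rintro (a | a) (b | b) (c | c) h1 h2 <;>
      first
        | exact P.rle_trans _ _ _ h1 h2
        | exact Q.rle_trans _ _ _ h1 h2
        | exact h1.elim
        | exact h2.elim
        | trivial
  compat := by
    rintro (a | a) (b | b) hne
    · exact P.compat a b fun h => hne (congrArg Sum.inl h)
    · show (False ∨ False) ↔ ¬ (True ∨ False)
      simp
    · show (False ∨ False) ↔ ¬ (False ∨ True)
      simp
    · exact Q.compat a b fun h => hne (congrArg Sum.inr h)

/-- The product `P ▷ Q` of two plane posets: `x ≤_h y` for every `x ∈ P`, `y ∈ Q`. -/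
def hcomp (P : PlanePoset α) (Q : PlanePoset β) : PlanePoset (α ⊕ β) where
  hle x y :=
    match x, y with
    | Sum.inl a, Sum.inl b => P.hle a b
    | Sum.inr a, Sum.inr b => Q.hle a b
    | Sum.inl _, Sum.inr _ => True
    | Sum.inr _, Sum.inl _ => False
  rle x y :=
    match x, y with
    | Sum.inl a, Sum.inl b => P.rle a b
    | Sum.inr a, Sum.inr b => Q.rle a b
    | _, _ => False
  hle_refl := by
    rintro (a | a)
    · exact P.hle_refl a
    · exact Q.hle_refl a
  hle_antisymm := by
    rintro (a | a) (b | b) h1 h2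
    · exact congrArg Sum.inl (P.hle_antisymm a b h1 h2)
    · exact h2.elim
    · exact h1.elim
    · exact congrArg Sum.inr (Q.hle_antisymm a b h1 h2)
  hle_trans := by
    rintro (a | a) (b | b) (c | c) h1 h2 <;>
      first
        | exact P.hle_trans _ _ _ h1 h2
        | exact Q.hle_trans _ _ _ h1 h2
        | exact h1.elim
        | exact h2.elim
        | trivial
  rle_refl := by
    rintro (a | a)
    · exact P.rle_refl a
    · exact Q.rle_refl a
  rle_antisymm := by
    rintro (a | a) (b | b) h1 h2
    · exact congrArg Sum.inl (P.rle_antisymm a b h1 h2)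
    · exact h1.elim
    · exact h1.elim
    · exact congrArg Sum.inr (Q.rle_antisymm a b h1 h2)
  rle_trans := by
    rintro (a | a) (b | b) (c | c) h1 h2 <;>
      first
        | exact P.rle_trans _ _ _ h1 h2
        | exact Q.rle_trans _ _ _ h1 h2
        | exact h1.elim
        | exact h2.elim
  compat := by
    rintro (a | a) (b | b) hne
    · exact P.compat a b fun h => hne (congrArg Sum.inl h)
    · show (True ∨ False) ↔ ¬ (False ∨ False)
      simp
    · show (False ∨ True) ↔ ¬ (False ∨ False)
      simp
    · exact Q.compat a b fun h => hne (congrArg Sum.inr h)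

/-- Restriction of a plane poset to a subset (a plane subposet). -/
def res (P : PlanePoset α) (s : Finset α) : PlanePoset {x : α // x ∈ s} where
  hle x y := P.hle x.1 y.1
  rle x y := P.rle x.1 y.1
  hle_refl x := P.hle_refl _
  hle_antisymm x y h1 h2 := Subtype.ext (P.hle_antisymm _ _ h1 h2)
  hle_trans x y z h1 h2 := P.hle_trans _ _ _ h1 h2
  rle_refl x := P.rle_refl _
  rle_antisymm x y h1 h2 := Subtype.ext (P.rle_antisymm _ _ h1 h2)
  rle_trans x y z h1 h2 := P.rle_trans _ _ _ h1 h2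
  compat x y hxy := P.compat _ _ fun h => hxy (Subtype.ext h)

/-- The involution `ι` exchanging the two partial orders. -/
def swap (P : PlanePoset α) : PlanePoset α where
  hle := P.rle
  rle := P.hle
  hle_refl := P.rle_refl
  hle_antisymm := P.rle_antisymm
  hle_trans := P.rle_trans
  rle_refl := P.hle_refl
  rle_antisymm := P.hle_antisymm
  rle_trans := P.hle_trans
  compat x y hxy := by
    have h := P.compat x y hxy
    tauto

end PlanePoset

/-- A plane poset structure on `Fin n` is canonical when the induced total order
is the usual order on `{1, …, n}`. -/
def IsCanon {n : ℕ} (P : PlanePoset (Fin n)) : Prop :=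
  ∀ x y : Fin n, (P.hle x y ∨ P.rle x y) ↔ x ≤ y

/-- `PP(n)`: (isoclasses of) plane posets of cardinality `n`, realized as the canonical
plane poset structures on `{1, …, n}`. -/
def CanonPP (n : ℕ) : Type := { P : PlanePoset (Fin n) // IsCanon P }

namespace CanonPP

/-- The empty plane poset, unit of both products. -/
def one : CanonPP 0 :=
  ⟨{ hle := fun _ _ => True
     rle := fun _ _ => True
     hle_refl := fun _ => trivial
     hle_antisymm := fun x => x.elim0
     hle_trans := fun _ _ _ _ _ => trivial
     rle_refl := fun _ => trivial
     rle_antisymm := fun x => x.elim0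
     rle_trans := fun _ _ _ _ _ => trivial
     compat := fun x => x.elim0 }, fun x => x.elim0⟩

/-- The composition `PQ` of plane posets, realized canonically. -/
def comp {k l : ℕ} (P : CanonPP k) (Q : CanonPP l) : CanonPP (k + l) :=
  ⟨(P.1.comp Q.1).map finSumFinEquiv, by
    intro x y
    obtain ⟨a, rfl⟩ := finSumFinEquiv.surjective x
    obtain ⟨b, rfl⟩ := finSumFinEquiv.surjective y
    simp only [PlanePoset.map_hle, PlanePoset.map_rle, Equiv.symm_apply_apply]
    rcases a with a | a <;> rcases b with b | b
    · show (P.1.hle a b ∨ P.1.rle a b) ↔ _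
      rw [P.2 a b, finSumFinEquiv_apply_left, finSumFinEquiv_apply_left]
      simp only [Fin.le_def, Fin.coe_castAdd]
      try omega
    · show (False ∨ True) ↔ _
      rw [finSumFinEquiv_apply_left, finSumFinEquiv_apply_right]
      have ha := a.isLt
      simp only [false_or, true_iff, Fin.le_def, Fin.coe_castAdd, Fin.coe_natAdd]
      omega
    · show (False ∨ False) ↔ _
      rw [finSumFinEquiv_apply_right, finSumFinEquiv_apply_left]
      have hb := b.isLt
      simp only [or_self, false_iff, Fin.le_def, Fin.coe_natAdd, Fin.coe_castAdd]
      omega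
    · show (Q.1.hle a b ∨ Q.1.rle a b) ↔ _
      rw [Q.2 a b, finSumFinEquiv_apply_right, finSumFinEquiv_apply_right]
      simp only [Fin.le_def, Fin.coe_natAdd]
      omega⟩

/-- The product `P ▷ Q` of plane posets, realized canonically. -/
def hcomp {k l : ℕ} (P : CanonPP k) (Q : CanonPP l) : CanonPP (k + l) :=
  ⟨(P.1.hcomp Q.1).map finSumFinEquiv, by
    intro x y
    obtain ⟨a, rfl⟩ := finSumFinEquiv.surjective x
    obtain ⟨b, rfl⟩ := finSumFinEquiv.surjective y
    simp only [PlanePoset.map_hle, PlanePoset.map_rle, Equiv.symm_apply_apply]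
    rcases a with a | a <;> rcases b with b | b
    · show (P.1.hle a b ∨ P.1.rle a b) ↔ _
      rw [P.2 a b, finSumFinEquiv_apply_left, finSumFinEquiv_apply_left]
      simp only [Fin.le_def, Fin.coe_castAdd]
      try omega
    · show (True ∨ False) ↔ _
      rw [finSumFinEquiv_apply_left, finSumFinEquiv_apply_right]
      have ha := a.isLt
      simp only [or_false, true_iff, Fin.le_def, Fin.coe_castAdd, Fin.coe_natAdd]
      omega
    · show (False ∨ False) ↔ _
      rw [finSumFinEquiv_apply_right, finSumFinEquiv_apply_left]
      have hb := b.isLt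
      simp only [or_self, false_iff, Fin.le_def, Fin.coe_natAdd, Fin.coe_castAdd]
      omega
    · show (Q.1.hle a b ∨ Q.1.rle a b) ↔ _
      rw [Q.2 a b, finSumFinEquiv_apply_right, finSumFinEquiv_apply_right]
      simp only [Fin.le_def, Fin.coe_natAdd]
      omega⟩

/-- Restriction of a plane poset to a plane subposet, realized canonically via the unique
increasing bijection. -/
def restrict {n : ℕ} (P : CanonPP n) (s : Finset (Fin n)) : CanonPP s.card :=
  ⟨(P.1.res s).map (s.orderIsoOfFin rfl).toEquiv.symm, by
    intro i j
    simp only [PlanePoset.map_hle, PlanePoset.map_rle, Equiv.symm_symm]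
    show (P.1.hle ((s.orderIsoOfFin rfl).toEquiv i).1 ((s.orderIsoOfFin rfl).toEquiv j).1 ∨
          P.1.rle ((s.orderIsoOfFin rfl).toEquiv i).1 ((s.orderIsoOfFin rfl).toEquiv j).1) ↔ i ≤ j
    rw [P.2]
    rw [Subtype.coe_le_coe]
    exact (s.orderIsoOfFin rfl).le_iff_le⟩

/-- The involution `ι`, on canonical plane posets. -/
def iota {n : ℕ} (P : CanonPP n) : CanonPP n :=
  ⟨P.1.swap, fun x y => by rw [or_comm]; exact P.2 x y⟩

end CanonPP

/-- The partial (weak Bruhat) order on `PP(n)`: `P ≤ Q` iff `x ≤_h y` in `Q` implies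
`x ≤_h y` in `P` (the increasing bijection between canonical representatives being
the identity). -/
def PPle {n : ℕ} (P Q : CanonPP n) : Prop :=
  ∀ x y : Fin n, Q.1.hle x y → P.1.hle x y

/-- Strict version of the order on `PP(n)`. -/
def PPlt {n : ℕ} (P Q : CanonPP n) : Prop := PPle P Q ∧ P ≠ Q

/-- Covering relation of the poset `(PP(n), ≤)`. -/
def PPcovBy {n : ℕ} (P Q : CanonPP n) : Prop :=
  PPlt P Q ∧ ∀ T : CanonPP n, PPlt P T → ¬ PPlt T Q

/-- `E(P) = {(i,j) | i <_h j}`. -/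
def Eset {n : ℕ} (P : CanonPP n) : Set (Fin n × Fin n) :=
  {p | P.1.hle p.1 p.2 ∧ p.1 ≠ p.2}

/-- A biideal of a plane poset: an ideal for both partial orders, equivalently an ideal
for the induced total order. -/
def IsBiideal {n : ℕ} (P : CanonPP n) (I : Finset (Fin n)) : Prop :=
  ∀ x y : Fin n, x ∈ I → (P.1.hle x y ∨ P.1.rle x y) → y ∈ I

/-- `h_s^t = #{(x,y) ∈ s × t | x <_h y}`. -/
def hNum {n : ℕ} (P : CanonPP n) (s t : Finset (Fin n)) : ℕ :=
  ((s ×ˢ t).filter (fun p : Fin n × Fin n => P.1.hle p.1 p.2 ∧ p.1 ≠ p.2)).card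

/-- `φ(P,Q) = #{(x,y) | x <_r y in P and x <_h y in Q} + #{(x,y) | x <_h y in P and
x <_r y in Q}` (via the identity increasing bijection). -/
def phi {n : ℕ} (P Q : CanonPP n) : ℕ :=
  (Finset.univ.filter (fun p : Fin n × Fin n =>
      (P.1.rle p.1 p.2 ∧ p.1 ≠ p.2) ∧ (Q.1.hle p.1 p.2 ∧ p.1 ≠ p.2))).card +
  (Finset.univ.filter (fun p : Fin n × Fin n =>
      (P.1.hle p.1 p.2 ∧ p.1 ≠ p.2) ∧ (Q.1.rle p.1 p.2 ∧ p.1 ≠ p.2))).card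

/-- The level `ℓ(P) = #{(x,y) | x <_r y}`. -/
def level {n : ℕ} (P : CanonPP n) : ℕ :=
  (Finset.univ.filter (fun p : Fin n × Fin n => P.1.rle p.1 p.2 ∧ p.1 ≠ p.2)).card

/-- The plane poset `P_σ = Ψ_n(σ)` associated to a permutation `σ`. -/
def PsiPerm {n : ℕ} (σ : Equiv.Perm (Fin n)) : CanonPP n :=
  ⟨{ hle := fun i j => i ≤ j ∧ σ.symm i ≤ σ.symm j
     rle := fun i j => i ≤ j ∧ σ.symm j ≤ σ.symm i
     hle_refl := fun x => ⟨le_refl x, le_refl _⟩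
     hle_antisymm := fun x y h1 h2 => le_antisymm h1.1 h2.1
     hle_trans := fun x y z h1 h2 => ⟨le_trans h1.1 h2.1, le_trans h1.2 h2.2⟩
     rle_refl := fun x => ⟨le_refl x, le_refl _⟩
     rle_antisymm := fun x y h1 h2 => le_antisymm h1.1 h2.1
     rle_trans := fun x y z h1 h2 => ⟨le_trans h1.1 h2.1, le_trans h2.2 h1.2⟩
     compat := by
       intro x y hxy
       have h1 : (x : ℕ) ≠ (y : ℕ) := fun h => hxy (Fin.ext h)
       have h2 : ((σ.symm x : Fin n) : ℕ) ≠ ((σ.symm y : Fin n) : ℕ) :=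
         fun h => hxy (σ.symm.injective (Fin.ext h))
       simp only [Fin.le_def]
       omega },
   by
     intro x y
     show ((x ≤ y ∧ σ.symm x ≤ σ.symm y) ∨ (x ≤ y ∧ σ.symm y ≤ σ.symm x)) ↔ x ≤ y
     simp only [Fin.le_def]
     omega⟩

/-- One step of the weak Bruhat order: exchange two consecutive letters `i < j`
(`i` appearing immediately before `j`) in the word `σ(1) ⋯ σ(n)`. -/
def bruhatStep {n : ℕ} (σ τ : Equiv.Perm (Fin n)) : Prop :=
  ∃ (i j k : Fin n) (hk : (k : ℕ) + 1 < n),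
    i < j ∧ σ k = i ∧ σ ⟨(k : ℕ) + 1, hk⟩ = j ∧ τ = Equiv.swap i j * σ

/-- The set of (isoclasses of) plane posets. -/
abbrev PPS : Type := Σ n : ℕ, CanonPP n

/-- Composition product on plane posets. -/
def PPS.comp (P Q : PPS) : PPS := ⟨P.1 + Q.1, P.2.comp Q.2⟩

/-- The product `▷` on plane posets. -/
def PPS.hcomp (P Q : PPS) : PPS := ⟨P.1 + Q.1, P.2.hcomp Q.2⟩

/-- Value of the coproduct `Δ_q` on a plane poset:
`Δ_q(P) = Σ_{I biideal of P} q^{h_{P∖I}^I} (P∖I) ⊗ I`. -/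
def deltaOn (K : Type) [Field K] (q : K) {n : ℕ} (P : CanonPP n) :
    (PPS →₀ K) ⊗[K] (PPS →₀ K) :=
  ∑ I ∈ Finset.univ.filter (fun I : Finset (Fin n) => IsBiideal P I),
    q ^ hNum P Iᶜ I •
      (Finsupp.single (⟨Iᶜ.card, P.restrict Iᶜ⟩ : PPS) (1 : K) ⊗ₜ[K]
        Finsupp.single (⟨I.card, P.restrict I⟩ : PPS) (1 : K))

/-- The coproduct `Δ_q` on `h_PP`, extended linearly. -/
def Delta (K : Type) [Field K] (q : K) :
    (PPS →₀ K) →ₗ[K] (PPS →₀ K) ⊗[K] (PPS →₀ K) :=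
  Finsupp.lift _ K PPS fun P => deltaOn K q P.2

/-- The composition product `m`, extended bilinearly to `h_PP`. -/
def mulPP (K : Type) [Field K] : (PPS →₀ K) →ₗ[K] (PPS →₀ K) →ₗ[K] (PPS →₀ K) :=
  Finsupp.lift _ K PPS fun P =>
    Finsupp.lift _ K PPS fun Q => Finsupp.single (PPS.comp P Q) 1

/-- The componentwise product on `h_PP ⊗ h_PP`. -/
def mulT (K : Type) [Field K] :
    ((PPS →₀ K) ⊗[K] (PPS →₀ K)) →ₗ[K] ((PPS →₀ K) ⊗[K] (PPS →₀ K)) →ₗ[K]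
      ((PPS →₀ K) ⊗[K] (PPS →₀ K)) :=
  TensorProduct.map₂ (mulPP K) (mulPP K)

/-- Multiplication of the basis element of a plane poset by `q^{n·c}` where `n` is its
cardinality. -/
def scale (K : Type) [Field K] (q : K) (c : ℕ) : (PPS →₀ K) →ₗ[K] (PPS →₀ K) :=
  Finsupp.lift _ K PPS fun P => q ^ (P.1 * c) • Finsupp.single P 1

/-- Right multiplication by a plane poset for the product `▷`. -/
def rmulH (K : Type) [Field K] (Q : PPS) : (PPS →₀ K) →ₗ[K] (PPS →₀ K) :=
  Finsupp.lift _ K PPS fun P => Finsupp.single (PPS.hcomp P Q) 1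

/-- Left multiplication by a plane poset for the product `▷`. -/
def lmulH (K : Type) [Field K] (P : PPS) : (PPS →₀ K) →ₗ[K] (PPS →₀ K) :=
  Finsupp.lift _ K PPS fun Q => Finsupp.single (PPS.hcomp P Q) 1

/-- The pairing on plane posets of the same cardinality:
`⟨P,Q⟩_q = q^{φ(P,Q)}` if `ι(P) ≤ Q`, and `0` otherwise. -/
def pairN (K : Type) [Field K] (q : K) {n : ℕ} (P Q : CanonPP n) : K :=
  if PPle (CanonPP.iota P) Q then q ^ phi P Q else 0

/-- The pairing `⟨-,-⟩_q` on plane posets (zero on posets of different cardinalities). -/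
def pairPP (K : Type) [Field K] (q : K) (P Q : PPS) : K :=
  if h : P.1 = Q.1 then pairN K q (cast (congrArg CanonPP h) P.2) Q.2 else 0

/-- The pairing `⟨-,-⟩_q`, extended bilinearly to `h_PP`. -/
def Bform (K : Type) [Field K] (q : K) : (PPS →₀ K) →ₗ[K] (PPS →₀ K) →ₗ[K] K :=
  Finsupp.lift _ K PPS fun P => Finsupp.lift K K PPS fun Q => pairPP K q P Q

end

/-!
In a canonical plane poset the total order is the usual order of `Fin n`, so the biideals are
exactly the final segments `upperCut n c`, and `Δ_q(P)` is a sum of one term per cut `c`.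
In `PQ` no element of `P` is `≤_h`-comparable to an element of `Q`; hence cutting `PQ` at `c`
cuts `P` at `c` and `Q` at `c - k`, both the restrictions and the exponent `h` split
accordingly, and the `c`-th term of `Δ_q(PQ)` is the product of the `c`-th term of `Δ_q(P)`
and the `(c - k)`-th term of `Δ_q(Q)`. For `c ≤ k` the second factor is `1 ⊗ Q`, for `c ≥ k`
the first is `P ⊗ 1`, and the cut `c = k`, counted in both ranges, contributes `P ⊗ Q`.
-/

open Finset

namespace CanonPP

theorem rle_iff {n : ℕ} (P : CanonPP n) (x y : Fin n) :
    P.1.rle x y ↔ x ≤ y ∧ (x = y ∨ ¬ P.1.hle x y) := by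
  rcases eq_or_ne x y with rfl | hxy
  · simpa using P.1.rle_refl x
  have hcompat := P.1.compat x y hxy
  have hxy' := P.2 x y
  constructor
  · intro hr
    exact ⟨hxy'.1 (Or.inr hr), Or.inr fun hh => hcompat.1 (Or.inl hh) (Or.inl hr)⟩
  · rintro ⟨hle, rfl | hnh⟩
    · exact P.1.rle_refl x
    · exact (hxy'.2 hle).resolve_left hnh

theorem ext {n : ℕ} {P Q : CanonPP n} (h : ∀ x y, P.1.hle x y ↔ Q.1.hle x y) : P = Q := by
  have hh : P.1.hle = Q.1.hle := by ext x y; exact h x y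
  have hr : P.1.rle = Q.1.rle := by ext x y; rw [rle_iff, rle_iff, h]
  rcases P with ⟨⟨⟩, _⟩
  rcases Q with ⟨⟨⟩, _⟩
  cases hh
  cases hr
  rfl

section comp

variable {k l : ℕ} (P : CanonPP k) (Q : CanonPP l)

@[simp] theorem comp_hle_castAdd_castAdd (x y : Fin k) :
    (P.comp Q).1.hle (Fin.castAdd l x) (Fin.castAdd l y) ↔ P.1.hle x y := by
  simp [CanonPP.comp, PlanePoset.comp]

@[simp] theorem comp_hle_natAdd_natAdd (x y : Fin l) :
    (P.comp Q).1.hle (Fin.natAdd k x) (Fin.natAdd k y) ↔ Q.1.hle x y := by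
  simp [CanonPP.comp, PlanePoset.comp]

@[simp] theorem comp_hle_castAdd_natAdd (x : Fin k) (y : Fin l) :
    ¬ (P.comp Q).1.hle (Fin.castAdd l x) (Fin.natAdd k y) := by
  simp [CanonPP.comp, PlanePoset.comp]

@[simp] theorem comp_hle_natAdd_castAdd (x : Fin l) (y : Fin k) :
    ¬ (P.comp Q).1.hle (Fin.natAdd k x) (Fin.castAdd l y) := by
  simp [CanonPP.comp, PlanePoset.comp]

end comp

@[simp] theorem restrict_hle {n : ℕ} (P : CanonPP n) (s : Finset (Fin n)) (i j : Fin s.card) :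
    (P.restrict s).1.hle i j ↔ P.1.hle (s.orderEmbOfFin rfl i) (s.orderEmbOfFin rfl j) := by
  simp [CanonPP.restrict, PlanePoset.res]

end CanonPP

theorem Fin.strictMono_addCases_castAdd_natAdd {a b k l : ℕ} {f : Fin a → Fin k}
    {g : Fin b → Fin l} (hf : StrictMono f) (hg : StrictMono g) :
    StrictMono (Fin.addCases (fun i => Fin.castAdd l (f i)) (fun j => Fin.natAdd k (g j))) := by
  intro x y hxy
  induction x using Fin.addCases <;> induction y using Fin.addCases <;>
    simp only [Fin.addCases_left, Fin.addCases_right, Fin.lt_def, Fin.val_castAdd,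
      Fin.val_natAdd] at hxy ⊢
  · exact hf (Fin.lt_def.2 hxy)
  · exact lt_of_lt_of_le (f _).isLt (Nat.le_add_right _ _)
  · omega
  · exact Nat.add_lt_add_left (hg (Fin.lt_def.2 (by omega))) k

@[simp] theorem Fin.castAdd_ne_natAdd {k l : ℕ} (x : Fin k) (y : Fin l) :
    Fin.castAdd l x ≠ Fin.natAdd k y := fun h => by
  have := congrArg Fin.val h
  simp only [Fin.val_castAdd, Fin.val_natAdd] at this
  omega

@[simp] theorem Fin.natAdd_ne_castAdd {k l : ℕ} (x : Fin k) (y : Fin l) :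
    Fin.natAdd k y ≠ Fin.castAdd l x :=
  (Fin.castAdd_ne_natAdd x y).symm

section FinSplit

variable {k l : ℕ} {s : Finset (Fin k)} {t : Finset (Fin l)}

theorem disjoint_map_castAddEmb_map_natAddEmb :
    Disjoint (s.map (Fin.castAddEmb l)) (t.map (Fin.natAddEmb k)) := by
  simp [disjoint_left]

@[simp] theorem castAdd_mem_map_union_map (x : Fin k) :
    Fin.castAdd l x ∈ s.map (Fin.castAddEmb l) ∪ t.map (Fin.natAddEmb k) ↔ x ∈ s := by
  simp

@[simp] theorem natAdd_mem_map_union_map (y : Fin l) :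
    Fin.natAdd k y ∈ s.map (Fin.castAddEmb l) ∪ t.map (Fin.natAddEmb k) ↔ y ∈ t := by
  simp

theorem compl_map_union_map :
    (s.map (Fin.castAddEmb l) ∪ t.map (Fin.natAddEmb k))ᶜ
      = sᶜ.map (Fin.castAddEmb l) ∪ tᶜ.map (Fin.natAddEmb k) := by
  ext x
  induction x using Fin.addCases <;> simp

end FinSplit


namespace PPS

theorem mk_eq_restrict_of_strictMono {m n : ℕ} (R : CanonPP m) (P : CanonPP n) (s : Finset (Fin n))
    (f : Fin m → Fin n) (hf : StrictMono f) (hfs : ∀ x, f x ∈ s) (hm : s.card = m)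
    (h : ∀ x y, R.1.hle x y ↔ P.1.hle (f x) (f y)) :
    (⟨m, R⟩ : PPS) = ⟨s.card, P.restrict s⟩ := by
  subst hm
  obtain rfl := s.orderEmbOfFin_unique rfl hfs hf
  exact congrArg _ (CanonPP.ext fun x y => by rw [h, CanonPP.restrict_hle])

theorem restrict_univ {n : ℕ} (P : CanonPP n) : (⟨_, P.restrict univ⟩ : PPS) = ⟨n, P⟩ :=
  (mk_eq_restrict_of_strictMono P P univ id strictMono_id (fun _ => mem_univ _) (by simp)
    fun _ _ => Iff.rfl).symm

theorem restrict_empty {n : ℕ} (P : CanonPP n) :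
    (⟨_, P.restrict ∅⟩ : PPS) = ⟨0, CanonPP.one⟩ :=
  (mk_eq_restrict_of_strictMono _ P ∅ Fin.elim0 (fun a => a.elim0) (fun a => a.elim0) rfl
    fun a => a.elim0).symm

theorem comp_one (X : PPS) : X.comp ⟨0, CanonPP.one⟩ = X := by
  obtain ⟨n, P⟩ := X
  change (⟨n + 0, P.comp CanonPP.one⟩ : PPS) = _
  rw [← restrict_univ (P.comp CanonPP.one)]
  exact (mk_eq_restrict_of_strictMono P _ univ (Fin.castAdd 0) (Fin.strictMono_castAdd 0)
    (fun _ => mem_univ _) (by simp) fun _ _ => (CanonPP.comp_hle_castAdd_castAdd _ _ _ _).symm).symm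

theorem one_comp (X : PPS) : PPS.comp ⟨0, CanonPP.one⟩ X = X := by
  obtain ⟨n, P⟩ := X
  change (⟨0 + n, CanonPP.one.comp P⟩ : PPS) = _
  rw [← restrict_univ (CanonPP.one.comp P)]
  exact (mk_eq_restrict_of_strictMono P _ univ (Fin.natAdd 0) (Fin.strictMono_natAdd 0)
    (fun _ => mem_univ _) (by simp) fun _ _ => (CanonPP.comp_hle_natAdd_natAdd _ _ _ _).symm).symm

theorem restrict_comp {k l : ℕ} (P : CanonPP k) (Q : CanonPP l) (s : Finset (Fin k))
    (t : Finset (Fin l)) :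
    (⟨_, (P.comp Q).restrict (s.map (Fin.castAddEmb l) ∪ t.map (Fin.natAddEmb k))⟩ : PPS)
      = PPS.comp ⟨_, P.restrict s⟩ ⟨_, Q.restrict t⟩ := by
  refine (mk_eq_restrict_of_strictMono ((P.restrict s).comp (Q.restrict t)) _ _
    (Fin.addCases (fun i => Fin.castAdd l (s.orderEmbOfFin rfl i))
      (fun j => Fin.natAdd k (t.orderEmbOfFin rfl j)))
    (Fin.strictMono_addCases_castAdd_natAdd (s.orderEmbOfFin rfl).strictMono
      (t.orderEmbOfFin rfl).strictMono) ?_ ?_ ?_).symm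
  · intro x
    induction x using Fin.addCases <;> simp
  · rw [card_union_of_disjoint disjoint_map_castAddEmb_map_natAddEmb, card_map, card_map]
  · intro x y
    induction x using Fin.addCases <;> induction y using Fin.addCases <;> simp

end PPS

theorem hNum_eq_sum {n : ℕ} (P : CanonPP n) (s t : Finset (Fin n)) :
    hNum P s t = ∑ x ∈ s, ∑ y ∈ t, if P.1.hle x y ∧ x ≠ y then 1 else 0 := by
  rw [hNum, card_filter, sum_product]

theorem hNum_comp {k l : ℕ} (P : CanonPP k) (Q : CanonPP l) (s s' : Finset (Fin k))
    (t t' : Finset (Fin l)) :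
    hNum (P.comp Q) (s.map (Fin.castAddEmb l) ∪ t.map (Fin.natAddEmb k))
        (s'.map (Fin.castAddEmb l) ∪ t'.map (Fin.natAddEmb k))
      = hNum P s s' + hNum Q t t' := by
  simp only [hNum_eq_sum, sum_union disjoint_map_castAddEmb_map_natAddEmb, sum_map]
  simp

def upperCut (n c : ℕ) : Finset (Fin n) := univ.filter fun x => c ≤ x.val

@[simp] theorem mem_upperCut {n c : ℕ} {x : Fin n} : x ∈ upperCut n c ↔ c ≤ x.val := by
  simp [upperCut]

theorem upperCut_zero (n : ℕ) : upperCut n 0 = univ := by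
  ext x
  simp

theorem upperCut_eq_empty {n c : ℕ} (h : n ≤ c) : upperCut n c = ∅ := by
  ext x
  simp only [mem_upperCut, notMem_empty, iff_false, not_le]
  exact lt_of_lt_of_le x.isLt h

theorem upperCut_add (k l c : ℕ) :
    upperCut (k + l) c
      = (upperCut k c).map (Fin.castAddEmb l) ∪ (upperCut l (c - k)).map (Fin.natAddEmb k) := by
  ext x
  induction x using Fin.addCases with
  | left x => simp only [castAdd_mem_map_union_map, mem_upperCut, Fin.val_castAdd]
  | right y =>
    simp only [natAdd_mem_map_union_map, mem_upperCut, Fin.val_natAdd]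
    omega

theorem upperCut_injOn (n : ℕ) : Set.InjOn (upperCut n) (range (n + 1)) := by
  have key : ∀ a b, a < b → b ≤ n → upperCut n a ≠ upperCut n b := fun a b hab hb h => by
    have ha : (⟨a, by omega⟩ : Fin n) ∈ upperCut n a := by simp
    rw [h, mem_upperCut] at ha
    exact absurd ha (by simpa using hab)
  intro a ha b hb h
  simp only [coe_range, Set.mem_Iio] at ha hb
  rcases lt_trichotomy a b with hab | rfl | hab
  · exact absurd h (key a b hab (by omega))
  · rfl
  · exact absurd h.symm (key b a hab (by omega))

namespace CanonPP

variable {n : ℕ} (P : CanonPP n)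

theorem isBiideal_iff (I : Finset (Fin n)) :
    IsBiideal P I ↔ ∀ x y, x ∈ I → x ≤ y → y ∈ I :=
  forall₂_congr fun x y => by rw [P.2 x y]

theorem isBiideal_upperCut (c : ℕ) : IsBiideal P (upperCut n c) := by
  rw [isBiideal_iff]
  intro x y hx hxy
  simp only [mem_upperCut] at hx ⊢
  exact le_trans hx hxy

theorem exists_upperCut_eq {I : Finset (Fin n)} (hI : IsBiideal P I) :
    ∃ c ≤ n, upperCut n c = I := by
  rw [isBiideal_iff] at hI
  rcases I.eq_empty_or_nonempty with rfl | hne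
  · exact ⟨n, le_rfl, upperCut_eq_empty le_rfl⟩
  refine ⟨I.min' hne, (I.min' hne).isLt.le, ?_⟩
  ext x
  rw [mem_upperCut, ← Fin.le_def]
  exact ⟨hI _ x (I.min'_mem hne), I.min'_le x⟩

end CanonPP

theorem Finset.sum_range_add_add_one_add {M : Type*} [AddCommMonoid M] (f : ℕ → M) (k l : ℕ) :
    ∑ c ∈ range (k + l + 1), f c + f k
      = ∑ c ∈ range (k + 1), f c + ∑ c ∈ range (l + 1), f (k + c) := by
  rw [show k + l + 1 = k + 1 + l by omega, sum_range_add, sum_range_succ' (fun c => f (k + c))]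
  simp only [add_zero, add_assoc, add_comm 1]

theorem Finsupp.lift_single_one {R M X : Type*} [Semiring R] [AddCommMonoid M] [Module R M]
    (f : X → M) (x : X) : Finsupp.lift M R X f (Finsupp.single x 1) = f x := by
  rw [← Finsupp.lift_symm_apply]
  simp

section Coproduct

variable (K : Type) [Field K] (q : K)

theorem Delta_single (X : PPS) : Delta K q (Finsupp.single X 1) = deltaOn K q X.2 :=
  Finsupp.lift_single_one _ _

theorem mulT_single_tmul (A B C D : PPS) :
    mulT K (Finsupp.single A 1 ⊗ₜ Finsupp.single B 1) (Finsupp.single C 1 ⊗ₜ Finsupp.single D 1)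
      = Finsupp.single (A.comp C) 1 ⊗ₜ Finsupp.single (B.comp D) 1 := by
  simp only [mulT, TensorProduct.map₂_apply_tmul, TensorProduct.map_tmul, mulPP,
    Finsupp.lift_single_one]

noncomputable def deltaTerm {n : ℕ} (P : CanonPP n) (J I : Finset (Fin n)) :
    (PPS →₀ K) ⊗[K] (PPS →₀ K) :=
  q ^ hNum P J I •
    (Finsupp.single (⟨J.card, P.restrict J⟩ : PPS) 1 ⊗ₜ Finsupp.single ⟨I.card, P.restrict I⟩ 1)

theorem deltaTerm_comp {k l : ℕ} (P : CanonPP k) (Q : CanonPP l) (s s' : Finset (Fin k))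
    (t t' : Finset (Fin l)) :
    deltaTerm K q (P.comp Q) (s.map (Fin.castAddEmb l) ∪ t.map (Fin.natAddEmb k))
        (s'.map (Fin.castAddEmb l) ∪ t'.map (Fin.natAddEmb k))
      = mulT K (deltaTerm K q P s s') (deltaTerm K q Q t t') := by
  simp only [deltaTerm, hNum_comp, PPS.restrict_comp, LinearMap.map_smul, LinearMap.smul_apply,
    mulT_single_tmul, pow_add, mul_smul]

theorem deltaTerm_univ_empty {n : ℕ} (P : CanonPP n) :
    deltaTerm K q P univ ∅
      = Finsupp.single (⟨n, P⟩ : PPS) 1 ⊗ₜ Finsupp.single ⟨0, CanonPP.one⟩ 1 := by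
  rw [deltaTerm, PPS.restrict_univ, PPS.restrict_empty]
  simp [hNum]

theorem deltaTerm_empty_univ {n : ℕ} (P : CanonPP n) :
    deltaTerm K q P ∅ univ
      = Finsupp.single (⟨0, CanonPP.one⟩ : PPS) 1 ⊗ₜ Finsupp.single ⟨n, P⟩ 1 := by
  rw [deltaTerm, PPS.restrict_univ, PPS.restrict_empty]
  simp [hNum]

noncomputable def cutTerm {n : ℕ} (P : CanonPP n) (c : ℕ) : (PPS →₀ K) ⊗[K] (PPS →₀ K) :=
  deltaTerm K q P (upperCut n c)ᶜ (upperCut n c)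

theorem deltaOn_eq_sum_cutTerm {n : ℕ} (P : CanonPP n) :
    deltaOn K q P = ∑ c ∈ range (n + 1), cutTerm K q P c := by
  refine (sum_nbij (upperCut n) (fun c _ => ?_) (upperCut_injOn n) (fun I hI => ?_)
    fun _ _ => rfl).symm
  · exact mem_filter.2 ⟨mem_univ _, P.isBiideal_upperCut c⟩
  · obtain ⟨c, hc, rfl⟩ := P.exists_upperCut_eq (mem_filter.1 hI).2
    exact ⟨c, by simpa [Nat.lt_succ_iff] using hc, rfl⟩

theorem cutTerm_comp {k l : ℕ} (P : CanonPP k) (Q : CanonPP l) (c : ℕ) :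
    cutTerm K q (P.comp Q) c = mulT K (cutTerm K q P c) (cutTerm K q Q (c - k)) := by
  rw [cutTerm, upperCut_add, compl_map_union_map, deltaTerm_comp]
  rfl

theorem cutTerm_zero {n : ℕ} (P : CanonPP n) :
    cutTerm K q P 0 = Finsupp.single (⟨0, CanonPP.one⟩ : PPS) 1 ⊗ₜ Finsupp.single ⟨n, P⟩ 1 := by
  rw [cutTerm, upperCut_zero, compl_univ, deltaTerm_empty_univ]

theorem cutTerm_of_le {n c : ℕ} (P : CanonPP n) (h : n ≤ c) :
    cutTerm K q P c = Finsupp.single (⟨n, P⟩ : PPS) 1 ⊗ₜ Finsupp.single ⟨0, CanonPP.one⟩ 1 := by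
  rw [cutTerm, upperCut_eq_empty h, compl_empty, deltaTerm_univ_empty]

end Coproduct

/-- For all plane posets `P, Q`, the coproduct `Δ_q` and the composition
product `m` satisfy the infinitesimal compatibility
`Δ_q(PQ) = (P ⊗ 1)Δ_q(Q) + Δ_q(P)(1 ⊗ Q) − P ⊗ Q`,
so that `(h_PP, m, Δ_q)` is an infinitesimal Hopf algebra. -/
theorem statement3 (K : Type) [Field K] (q : K) {k l : ℕ} (P : CanonPP k) (Q : CanonPP l) :
    Delta K q (Finsupp.single (⟨k + l, P.comp Q⟩ : PPS) 1)
      = mulT K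
          (Finsupp.single (⟨k, P⟩ : PPS) 1 ⊗ₜ[K] Finsupp.single (⟨0, CanonPP.one⟩ : PPS) 1)
          (Delta K q (Finsupp.single (⟨l, Q⟩ : PPS) 1))
        + mulT K (Delta K q (Finsupp.single (⟨k, P⟩ : PPS) 1))
            (Finsupp.single (⟨0, CanonPP.one⟩ : PPS) 1 ⊗ₜ[K] Finsupp.single (⟨l, Q⟩ : PPS) 1)
        - Finsupp.single (⟨k, P⟩ : PPS) 1 ⊗ₜ[K] Finsupp.single (⟨l, Q⟩ : PPS) 1 := by
  have hlow : ∀ c ∈ range (k + 1), cutTerm K q (P.comp Q) c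
      = mulT K (cutTerm K q P c)
          (Finsupp.single (⟨0, CanonPP.one⟩ : PPS) 1 ⊗ₜ Finsupp.single (⟨l, Q⟩ : PPS) 1) := by
    intro c hc
    rw [cutTerm_comp, Nat.sub_eq_zero_of_le (Nat.lt_succ_iff.1 (mem_range.1 hc)), cutTerm_zero]
  have hhigh : ∀ c, cutTerm K q (P.comp Q) (k + c)
      = mulT K (Finsupp.single (⟨k, P⟩ : PPS) 1 ⊗ₜ Finsupp.single (⟨0, CanonPP.one⟩ : PPS) 1)
          (cutTerm K q Q c) := by
    intro c
    rw [cutTerm_comp, Nat.add_sub_cancel_left, cutTerm_of_le K q P (Nat.le_add_right k c)]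
  have hcut : cutTerm K q (P.comp Q) k
      = Finsupp.single (⟨k, P⟩ : PPS) 1 ⊗ₜ Finsupp.single (⟨l, Q⟩ : PPS) 1 := by
    rw [hlow k (self_mem_range_succ k), cutTerm_of_le K q P le_rfl, mulT_single_tmul,
      PPS.comp_one, PPS.one_comp]
  simp only [Delta_single, deltaOn_eq_sum_cutTerm, map_sum, LinearMap.sum_apply]
  rw [eq_sub_iff_add_eq, ← hcut, sum_range_add_add_one_add, sum_congr rfl hlow, add_comm]
  simp only [hhigh]
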